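/- arXiv:1907.01464 — 2 statements merged into one kernel-verified Lean document; each statement's English description precedes it below -/
import Mathlib

section
/- Let L be a PCE language whose signature is eventually periodic with periodic rhythm of directing parameter (q,p) (i.e., the period is a q-tuple of nonnegative integers summing to p, with p > q ≥ 1). Then the local growth rate of L exists and equals p/q: lim_{ℓ→∞} u_L(ℓ+1)/u_L(ℓ) = p/q. -/
/-!
Let `v ℓ` count the words of length `≤ ℓ`. Read breadth-first, the children of the first
`v ℓ` nodes of the language tree are exactly the nonempty words of length `≤ ℓ + 1`, so
`v (ℓ + 1)` is the sum of the first `v ℓ` terms of the signature. An eventually periodic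
sequence with `q`-term blocks summing to `p` has partial sums `(p / q) m + O(1)`, hence
`v (ℓ + 1) = (p / q) v ℓ + O(1)`. As `v ℓ → ∞`, the increments
`u (ℓ + 1) = v (ℓ + 1) - v ℓ` satisfy the same relation and, because `p / q > 1`, also
tend to infinity; dividing the relation by `u ℓ` gives `u (ℓ + 1) / u ℓ → p / q`.
-/

open Filter Topology

/-- Length of the longest common prefix of two words. -/
def lcpLen {A : Type*} [DecidableEq A] : List A → List A → ℕ
  | a :: u, b :: v => if a = b then lcpLen u v + 1 else 0
  | _, _ => 0

/-- `Delta u v`: if `|u| = |v|`, the length of `u` minus the length of the longest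
common prefix of `u` and `v`; otherwise `max |u| |v|` (padding convention). -/
def Delta {A : Type*} [DecidableEq A] (u v : List A) : ℕ :=
  if u.length = v.length then u.length - lcpLen u v else max u.length v.length

/-- Radix (genealogical) order: shorter words first, words of equal length
compared lexicographically. -/
def RadixLt {A : Type*} [LT A] (u v : List A) : Prop :=
  u.length < v.length ∨ (u.length = v.length ∧ List.Lex (· < ·) u v)

/-- A language is PCE if it is prefix-closed and right-extendable. -/
def PCE {A : Type*} (L : Set (List A)) : Prop :=
  (∀ w ∈ L, ∀ u, u <+: w → u ∈ L) ∧ (∀ w ∈ L, ∃ v ∈ L, w <+: v ∧ w ≠ v)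

/-- `rep` enumerates `L` in radix order: it is a bijection from `ℕ` onto `L`
which is strictly increasing for the radix order, so `rep n` is the `(n+1)`-th
word of `L` (the `L`-representation of `n`). -/
def RadixEnum {A : Type*} [LT A] (L : Set (List A)) (rep : ℕ → List A) : Prop :=
  Set.BijOn rep Set.univ L ∧ ∀ m n : ℕ, m < n → RadixLt (rep m) (rep n)

/-- Number of words of `L` of length `ℓ`. -/
noncomputable def uCount {A : Type*} (L : Set (List A)) (ℓ : ℕ) : ℕ :=
  {w ∈ L | w.length = ℓ}.ncard

/-- Number of words of `L` of length at most `ℓ`. -/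
noncomputable def vCount {A : Type*} (L : Set (List A)) (ℓ : ℕ) : ℕ :=
  {w ∈ L | w.length ≤ ℓ}.ncard

/-- The left bank of a word `v`: words of `L` of length at most `|v|` that are
lexicographically smaller than `v`, excluding the prefixes of `v`. -/
def leftBank {A : Type*} [LT A] (L : Set (List A)) (v : List A) : Set (List A) :=
  {w ∈ L | w.length ≤ v.length ∧ List.Lex (· < ·) w v} \ {w | w <+: v}

/-- Degree of the node `w` in the language tree of `L`: the number of letters
`a` with `w·a ∈ L`. -/
noncomputable def nodeDeg {A : Type*} (L : Set (List A)) (w : List A) : ℕ :=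
  {a : A | w ++ [a] ∈ L}.ncard

/-- The signature of `L` (with radix enumeration `rep`): the sequence of degrees
of the nodes in breadth-first (radix) order, the root counting itself as an
extra child (i-tree convention). -/
noncomputable def signature {A : Type*} (L : Set (List A)) (rep : ℕ → List A) (n : ℕ) : ℕ :=
  nodeDeg L (rep n) + if n = 0 then 1 else 0

def IsPrefixClosed {A : Type*} (L : Set (List A)) : Prop :=
  ∀ w ∈ L, ∀ u, u <+: w → u ∈ L

section Counting

variable {A : Type*} [Fintype A]

theorem finite_setOf_length_le (L : Set (List A)) (ℓ : ℕ) :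
    {w ∈ L | w.length ≤ ℓ}.Finite :=
  (List.finite_length_le A ℓ).subset fun _ hw => hw.2

theorem vCount_succ (L : Set (List A)) (ℓ : ℕ) :
    vCount L (ℓ + 1) = vCount L ℓ + uCount L (ℓ + 1) := by
  have hsplit : {w ∈ L | w.length ≤ ℓ + 1}
      = {w ∈ L | w.length ≤ ℓ} ∪ {w ∈ L | w.length = ℓ + 1} := by
    ext w
    simp only [Set.mem_union, Set.mem_ofPred_eq, ← and_or_left]
    exact and_congr_right fun _ => by omega
  rw [vCount, vCount, uCount, hsplit, Set.ncard_union_eq _ (finite_setOf_length_le L ℓ)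
    ((finite_setOf_length_le L (ℓ + 1)).subset fun _ hw => ⟨hw.1, hw.2.le⟩)]
  exact Set.disjoint_left.mpr fun w hw hw' => by have := hw.2; have := hw'.2; omega

theorem nodeDeg_eq_card (L : Set (List A)) [DecidablePred (· ∈ L)] (w : List A) :
    nodeDeg L w = (Finset.univ.filter fun a => w ++ [a] ∈ L).card := by
  rw [nodeDeg, Set.ncard_eq_toFinset_card', Set.toFinset_ofPred]

/-- Every nonempty word of a prefix-closed language is a child `w ++ [a]` of exactly one
node `w`, and the root `[]` is nobody's child. -/
theorem sum_nodeDeg_add_one {L : Set (List A)} (hpre : IsPrefixClosed L) (hnil : [] ∈ L)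
    (ℓ : ℕ) :
    ∑ w ∈ (finite_setOf_length_le L ℓ).toFinset, nodeDeg L w + 1 = vCount L (ℓ + 1) := by
  classical
  set S := (finite_setOf_length_le L ℓ).toFinset
  set S' := (finite_setOf_length_le L (ℓ + 1)).toFinset
  have hchildren : (S.sigma fun w => Finset.univ.filter fun a => w ++ [a] ∈ L).card
      = (S'.erase []).card := by
    refine Finset.card_bij (fun x _ => x.1 ++ [x.2]) ?_ ?_ ?_
    · rintro ⟨w, a⟩ hx
      simp only [S, S', Finset.mem_sigma, Finset.mem_filter, Set.Finite.mem_toFinset,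
        Finset.mem_erase, Set.mem_ofPred_eq] at hx ⊢
      exact ⟨by simp, hx.2.2, by simp; omega⟩
    · rintro ⟨w, a⟩ _ ⟨w', a'⟩ _ h
      obtain ⟨rfl, h'⟩ := List.append_inj' h rfl
      cases List.singleton_inj.mp h'
      rfl
    · intro x hx
      simp only [S', Finset.mem_erase, Set.Finite.mem_toFinset, Set.mem_ofPred_eq] at hx
      obtain ⟨hne, hxL, hlen⟩ := hx
      refine ⟨⟨x.dropLast, x.getLast hne⟩, ?_, List.dropLast_append_getLast hne⟩
      simp only [S, Finset.mem_sigma, Finset.mem_filter, Set.Finite.mem_toFinset,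
        Set.mem_ofPred_eq, List.length_dropLast, Finset.mem_univ, true_and,
        List.dropLast_append_getLast hne]
      exact ⟨⟨hpre x hxL _ (List.dropLast_prefix x), by omega⟩, hxL⟩
  rw [Finset.sum_congr rfl fun w _ => nodeDeg_eq_card L w, ← Finset.card_sigma, hchildren,
    Finset.card_erase_add_one (by simpa [S'] using hnil), vCount,
    Set.ncard_eq_toFinset_card _ (finite_setOf_length_le L (ℓ + 1))]

end Counting

section RadixEnumeration

variable {A : Type*} [LinearOrder A] {L : Set (List A)} {rep : ℕ → List A}

theorem RadixEnum.mem (hrep : RadixEnum L rep) (n : ℕ) : rep n ∈ L :=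
  hrep.1.1 (Set.mem_univ n)

theorem RadixEnum.monotone_length (hrep : RadixEnum L rep) :
    Monotone fun n => (rep n).length :=
  monotone_nat_of_le_succ fun n => (hrep.2 n (n + 1) n.lt_succ_self).elim le_of_lt fun h => h.1.le

/-- Radix order compares lengths first, so the words of length `≤ ℓ` form an initial segment
of the enumeration. -/
theorem RadixEnum.bijOn_Iio_vCount [Fintype A] (hrep : RadixEnum L rep) (ℓ : ℕ) :
    Set.BijOn rep (Set.Iio (vCount L ℓ)) {w ∈ L | w.length ≤ ℓ} := by
  set S := {w ∈ L | w.length ≤ ℓ}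
  have hinj : Set.InjOn rep (rep ⁻¹' S) := hrep.1.2.1.mono (Set.subset_univ _)
  have hbij : Set.BijOn rep (rep ⁻¹' S) S := by
    refine ⟨Set.mapsTo_preimage rep S, hinj, fun w hw => ?_⟩
    obtain ⟨n, -, rfl⟩ := hrep.1.2.2 hw.1
    exact ⟨n, hw, rfl⟩
  have hlower : IsLowerSet (rep ⁻¹' S) := fun n m hmn hn =>
    ⟨hrep.mem m, (hrep.monotone_length hmn).trans hn.2⟩
  have hfinite : (rep ⁻¹' S).Finite :=
    Set.Finite.of_injOn (Set.mapsTo_preimage rep S) hinj (finite_setOf_length_le L ℓ)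
  obtain ⟨a, ha⟩ := hlower.eq_univ_or_Iio.resolve_left fun h =>
    Set.infinite_univ (h ▸ hfinite)
  have hcard : a = vCount L ℓ := by
    rw [vCount, ← hbij.ncard_eq, ha, Set.ncard_Iio_nat]
  rwa [← hcard, ← ha]

theorem RadixEnum.vCount_succ_eq_sum_signature [Fintype A] (hpre : IsPrefixClosed L)
    (hrep : RadixEnum L rep) (ℓ : ℕ) :
    vCount L (ℓ + 1) = ∑ n ∈ Finset.range (vCount L ℓ), signature L rep n := by
  have hnil : [] ∈ L := hpre _ (hrep.mem 0) [] List.nil_prefix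
  have hpos : 0 < vCount L ℓ :=
    (Set.ncard_pos (finite_setOf_length_le L ℓ)).mpr ⟨[], hnil, Nat.zero_le ℓ⟩
  have hbij := hrep.bijOn_Iio_vCount ℓ
  have hdeg : ∑ n ∈ Finset.range (vCount L ℓ), nodeDeg L (rep n)
      = ∑ w ∈ (finite_setOf_length_le L ℓ).toFinset, nodeDeg L w :=
    Finset.sum_nbij rep (fun n hn => by simpa using hbij.mapsTo (by simpa using hn))
      (by simpa using hbij.injOn) (by simpa using hbij.surjOn) fun _ _ => rfl
  rw [← sum_nodeDeg_add_one hpre hnil ℓ, ← hdeg]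
  simp only [signature, Finset.sum_add_distrib, Finset.sum_ite_eq', Finset.mem_range, hpos,
    if_true]

end RadixEnumeration

section PCE

variable {A : Type*} {L : Set (List A)}

theorem PCE.exists_mem_length_eq (hL : PCE L) (hne : L.Nonempty) (ℓ : ℕ) :
    ∃ w ∈ L, w.length = ℓ := by
  have hlong : ∀ k, ∃ w ∈ L, k ≤ w.length := by
    intro k
    induction k with
    | zero => exact hne.imp fun w hw => ⟨hw, Nat.zero_le _⟩
    | succ k ih =>
      obtain ⟨w, hw, hk⟩ := ih
      obtain ⟨v, hv, hwv, hne⟩ := hL.2 w hw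
      exact ⟨v, hv, hk.trans_lt (hwv.length_le.lt_of_ne fun h => hne (hwv.eq_of_length h))⟩
  obtain ⟨w, hw, hℓ⟩ := hlong ℓ
  exact ⟨w.take ℓ, hL.1 w hw _ (List.take_prefix ℓ w), by simp [hℓ]⟩

theorem PCE.uCount_pos [Fintype A] (hL : PCE L) (hne : L.Nonempty) (ℓ : ℕ) : 0 < uCount L ℓ :=
  (Set.ncard_pos ((finite_setOf_length_le L ℓ).subset fun _ hw => ⟨hw.1, hw.2.le⟩)).mpr
    (hL.exists_mem_length_eq hne ℓ)

theorem PCE.strictMono_vCount [Fintype A] (hL : PCE L) (hne : L.Nonempty) :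
    StrictMono (vCount L) :=
  strictMono_nat_of_lt_succ fun ℓ => by
    rw [vCount_succ]
    exact Nat.lt_add_of_pos_right (hL.uCount_pos hne (ℓ + 1))

end PCE

section Periodic

variable {r : ℕ → ℕ} {q p : ℕ}

theorem Function.Periodic.sum_range_mul_add (hr : Function.Periodic r q)
    (hsum : ∑ i ∈ Finset.range q, r i = p) (t s : ℕ) :
    ∑ i ∈ Finset.range (q * t + s), r i = t * p + ∑ i ∈ Finset.range s, r i := by
  induction t with
  | zero => simp
  | succ t ih =>
    rw [show q * (t + 1) + s = q + (q * t + s) by ring, Finset.sum_range_add, hsum]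
    rw [Finset.sum_congr rfl fun i _ => by rw [add_comm, hr], ih]
    ring

theorem Function.Periodic.abs_mul_sum_range_sub_le (hq : 0 < q) (hr : Function.Periodic r q)
    (hsum : ∑ i ∈ Finset.range q, r i = p) (k : ℕ) :
    |(q : ℝ) * ∑ i ∈ Finset.range k, r i - p * k| ≤ p * q := by
  have hk := Nat.div_add_mod k q
  have hs : ∑ i ∈ Finset.range (k % q), r i ≤ p :=
    hsum ▸ Finset.sum_le_sum_of_subset (Finset.range_subset_range.mpr (Nat.mod_lt k hq).le)
  have hsplit : (q : ℝ) * ∑ i ∈ Finset.range k, r i - p * k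
      = q * ∑ i ∈ Finset.range (k % q), r i - p * (k % q : ℕ) := by
    conv_lhs => rw [← hk, hr.sum_range_mul_add hsum]
    push_cast
    ring
  rw [hsplit]
  refine abs_sub_le_of_nonneg_of_le (by positivity) ?_ (by positivity) ?_
  · rw [mul_comm (p : ℝ)]; gcongr
  · gcongr; exact_mod_cast (Nat.mod_lt k hq).le

theorem exists_abs_mul_sum_range_sub_le_of_eventually_periodic {f : ℕ → ℕ} {n₀ : ℕ}
    (hq : 0 < q) (hr : Function.Periodic r q) (hsum : ∑ i ∈ Finset.range q, r i = p)
    (hf : ∀ n ≥ n₀, f n = r (n - n₀)) :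
    ∃ C, ∀ m ≥ n₀, |(q : ℝ) * ∑ n ∈ Finset.range m, f n - p * m| ≤ C := by
  set D : ℝ := q * ∑ n ∈ Finset.range n₀, (f n : ℝ) - p * n₀
  refine ⟨p * q + |D|, fun m hm => ?_⟩
  obtain ⟨k, rfl⟩ := Nat.exists_eq_add_of_le hm
  have htail : ∑ i ∈ Finset.range k, f (n₀ + i) = ∑ i ∈ Finset.range k, r i :=
    Finset.sum_congr rfl fun i _ => by rw [hf _ (by omega), Nat.add_sub_cancel_left]
  calc |(q : ℝ) * ∑ n ∈ Finset.range (n₀ + k), f n - p * ↑(n₀ + k)|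
      = |((q : ℝ) * ∑ i ∈ Finset.range k, r i - p * k) + D| := by
        rw [Finset.sum_range_add, htail]; push_cast; simp only [D]; congr 1; ring
    _ ≤ p * q + |D| :=
        (abs_add_le _ _).trans (by gcongr; exact hr.abs_mul_sum_range_sub_le hq hsum k)

end Periodic

section Asymptotics

variable {x : ℕ → ℝ} {ρ C : ℝ}

theorem tendsto_succ_div_of_abs_sub_mul_le (hx : Tendsto x atTop atTop)
    (hC : ∀ᶠ n in atTop, |x (n + 1) - ρ * x n| ≤ C) :
    Tendsto (fun n => x (n + 1) / x n) atTop (𝓝 ρ) := by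
  have hdev : Tendsto (fun n => x (n + 1) / x n - ρ) atTop (𝓝 0) := by
    refine squeeze_zero_norm' ?_ ((tendsto_const_nhds (x := C)).div_atTop hx)
    filter_upwards [hC, hx.eventually_gt_atTop 0] with n hn hpos
    rw [Real.norm_eq_abs, div_sub' hpos.ne', abs_div, abs_of_pos hpos, mul_comm]
    gcongr
  simpa using hdev.add_const ρ

theorem tendsto_atTop_succ_sub_of_abs_sub_mul_le (hρ : 1 < ρ) (hx : Tendsto x atTop atTop)
    (hC : ∀ᶠ n in atTop, |x (n + 1) - ρ * x n| ≤ C) :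
    Tendsto (fun n => x (n + 1) - x n) atTop atTop := by
  have hlower : Tendsto (fun n => (ρ - 1) * x n - C) atTop atTop :=
    tendsto_atTop_add_const_right _ _ (hx.const_mul_atTop (sub_pos.mpr hρ))
  refine tendsto_atTop_mono' _ ?_ hlower
  filter_upwards [hC] with n hn
  linarith [neg_abs_le (x (n + 1) - ρ * x n)]

theorem abs_succ_sub_sub_mul_sub_le (hC : ∀ᶠ n in atTop, |x (n + 1) - ρ * x n| ≤ C) :
    ∀ᶠ n in atTop, |(x (n + 2) - x (n + 1)) - ρ * (x (n + 1) - x n)| ≤ 2 * C := by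
  filter_upwards [hC, (tendsto_add_atTop_nat 1).eventually hC] with n hn hn'
  calc |(x (n + 2) - x (n + 1)) - ρ * (x (n + 1) - x n)|
      = |(x (n + 1 + 1) - ρ * x (n + 1)) - (x (n + 1) - ρ * x n)| := by ring_nf
    _ ≤ |x (n + 1 + 1) - ρ * x (n + 1)| + |x (n + 1) - ρ * x n| := abs_sub _ _
    _ ≤ 2 * C := by linarith

theorem tendsto_succ_sub_div_sub_of_abs_sub_mul_le (hρ : 1 < ρ) (hx : Tendsto x atTop atTop)
    (hC : ∀ᶠ n in atTop, |x (n + 1) - ρ * x n| ≤ C) :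
    Tendsto (fun n => (x (n + 2) - x (n + 1)) / (x (n + 1) - x n)) atTop (𝓝 ρ) :=
  tendsto_succ_div_of_abs_sub_mul_le (x := fun n => x (n + 1) - x n)
    (tendsto_atTop_succ_sub_of_abs_sub_mul_le hρ hx hC) (abs_succ_sub_sub_mul_sub_le hC)

end Asymptotics

/-- If a PCE language `L` has an eventually periodic signature whose periodic
rhythm has directing parameter `(q, p)` (a `q`-periodic sequence of nonnegative
integers summing to `p` over one period, `p > q ≥ 1`), then the local growth
rate of `L` exists and equals `p / q`. -/
theorem carry_stmt12 {A : Type*} [Fintype A] [LinearOrder A]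
    (L : Set (List A)) (hL : PCE L)
    (rep : ℕ → List A) (hrep : RadixEnum L rep)
    (p q : ℕ) (hq : 1 ≤ q) (hpq : q < p)
    (r : ℕ → ℕ) (hper : ∀ i, r (i + q) = r i)
    (hsum : ∑ i ∈ Finset.range q, r i = p)
    (n₀ : ℕ) (hsig : ∀ n ≥ n₀, signature L rep n = r (n - n₀)) :
    Tendsto (fun ℓ : ℕ => (uCount L (ℓ + 1) : ℝ) / (uCount L ℓ : ℝ)) atTop
      (nhds ((p : ℝ) / (q : ℝ))) := by
  have hmono := hL.strictMono_vCount ⟨rep 0, hrep.mem 0⟩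
  set V : ℕ → ℝ := fun ℓ => vCount L ℓ
  have hV : Tendsto V atTop atTop := tendsto_natCast_atTop_atTop.comp hmono.tendsto_atTop
  have hq₀ : (0 : ℝ) < q := by exact_mod_cast hq
  obtain ⟨C, hC⟩ := exists_abs_mul_sum_range_sub_le_of_eventually_periodic hq hper hsum hsig
  have hdefect : ∀ᶠ ℓ in atTop, |V (ℓ + 1) - p / q * V ℓ| ≤ C / q := by
    filter_upwards [hmono.tendsto_atTop.eventually_ge_atTop n₀] with ℓ hℓ
    have hrec := hC _ hℓ
    rw [← hrep.vCount_succ_eq_sum_signature hL.1 ℓ] at hrec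
    rw [show V (ℓ + 1) - p / q * V ℓ = (q * V (ℓ + 1) - p * V ℓ) / q by field_simp, abs_div,
      abs_of_pos hq₀]
    gcongr
  have hρ : 1 < (p : ℝ) / q := (one_lt_div hq₀).mpr (by exact_mod_cast hpq)
  have hU : ∀ ℓ, (uCount L (ℓ + 1) : ℝ) = V (ℓ + 1) - V ℓ := fun ℓ => by
    simp only [V, vCount_succ L ℓ]; push_cast; ring
  rw [← tendsto_add_atTop_iff_nat 1]
  simpa only [hU] using tendsto_succ_sub_div_sub_of_abs_sub_mul_le hρ hV hdefect
end

section
/- Let L be a PCE language with eventually periodic signature whose periodic rhythm has directing parameter (q,p), p > q ≥ 1. Then the carry propagation CP(L) = lim_{N→∞} (1/N) ∑_{i=0}^{N−1} cp_L(i) exists and equals p/(p−q). -/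
open Filter Topology

/-!
Let `parentIdx rep n` be the index of `(rep n).dropLast`, the parent of the `n`-th word in the
language tree. The tree is enumerated breadth-first, so the children of a node get consecutive
indices; counting the root as its own child, exactly `s₀ + ⋯ + s_{j-1}` indices have their
parent below `j`, where `s` is the signature. Eventual periodicity makes this sum `μ j + O(1)`
with `μ = p / q > 1`, hence `n = μ · parentIdx rep n + O(1)`.

From `n` to `n + 1` every ancestor of `rep n` that changes moves up by exactly one index, and the
number of changing ancestors is the carry `Delta`. So the carries up to `n` add up to the sum of
the ancestor indices `∑_{i < |rep n|} parentIdx^[i] n`. These shrink by the factor `μ` at each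
step, so the sum is `μ / (μ - 1) · n + O(|rep n|)`, and for the same reason `|rep n| = O(log n)`.
-/

section LongestCommonPrefix

variable {α : Type*} [DecidableEq α]

theorem lcpLen_le_length_left : ∀ u v : List α, lcpLen u v ≤ u.length
  | a :: u, b :: v => by
    simp only [lcpLen]
    split
    · simpa using lcpLen_le_length_left u v
    · simp
  | [], _ => by simp [lcpLen]
  | _ :: _, [] => by simp [lcpLen]

theorem take_eq_take_iff_le_lcpLen :
    ∀ {u v : List α}, u ≠ v → ∀ k, (u.take k = v.take k ↔ k ≤ lcpLen u v)
  | [], [], h, _ => absurd rfl h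
  | [], _ :: _, _, k => by cases k <;> simp [lcpLen]
  | _ :: _, [], _, k => by cases k <;> simp [lcpLen]
  | a :: u, b :: v, h, k => by
    cases k with
    | zero => simp
    | succ k =>
      rcases eq_or_ne a b with rfl | hab
      · have huv : u ≠ v := by rintro rfl; exact h rfl
        simp [lcpLen, take_eq_take_iff_le_lcpLen huv k]
      · simp [lcpLen, hab]

end LongestCommonPrefix

theorem List.Lex.of_take {α : Type*} [LT α] : ∀ {u v : List α} (k : ℕ),
    Lex (· < ·) (u.take k) (v.take k) → Lex (· < ·) u v
  | _, _, 0, h => by simp at h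
  | [], [], _ + 1, h => by simp at h
  | [], _ :: _, _ + 1, _ => Lex.nil
  | _ :: _, [], _ + 1, h => by simp at h
  | _ :: _, _ :: _, k + 1, h => by
    simp only [take_succ_cons] at h
    cases h with
    | rel hab => exact Lex.rel hab
    | cons h => exact Lex.cons (Lex.of_take k h)

section Radix

variable {A : Type*} [LinearOrder A] {u v w : List A}

theorem RadixLt.length_le (h : RadixLt u v) : u.length ≤ v.length := by
  rcases h with h | ⟨h, -⟩ <;> omega

theorem RadixLt.asymm (h : RadixLt u v) : ¬ RadixLt v u := by
  rintro (h' | ⟨h', h'lex⟩) <;> rcases h with h | ⟨h, hlex⟩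
  all_goals first | omega | exact _root_.asymm hlex h'lex

theorem not_radixLt_nil : ¬ RadixLt w [] := by
  rintro (h | ⟨h, hlex⟩)
  · simp at h
  · cases hlex

theorem radixLt_dropLast (hw : w ≠ []) : RadixLt w.dropLast w :=
  Or.inl (by simpa using List.length_pos_iff.mpr hw)

theorem RadixLt.of_dropLast (h : RadixLt u.dropLast v.dropLast) : RadixLt u v := by
  rcases h with h | ⟨h, hlex⟩
  · simp only [List.length_dropLast] at h
    exact Or.inl (by omega)
  · simp only [List.length_dropLast] at h
    rcases Nat.lt_or_ge u.length v.length with huv | huv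
    · exact Or.inl huv
    · have hlen : u.length = v.length := by
        by_contra hne
        have hv : v = [] := List.length_eq_zero_iff.mp (by omega)
        simp [hv] at hlex
      refine Or.inr ⟨hlen, List.Lex.of_take (u.length - 1) ?_⟩
      rwa [← List.dropLast_eq_take, hlen, ← List.dropLast_eq_take]

end Radix

namespace PCE

variable {A : Type*} {L : Set (List A)} {w : List A}

theorem take_mem (hL : PCE L) (hw : w ∈ L) (k : ℕ) : w.take k ∈ L :=
  hL.1 w hw _ (List.take_prefix k w)

theorem dropLast_mem (hL : PCE L) (hw : w ∈ L) : w.dropLast ∈ L :=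
  hL.1 w hw _ (List.dropLast_prefix w)

theorem exists_append_singleton_mem (hL : PCE L) (hw : w ∈ L) : ∃ a, w ++ [a] ∈ L := by
  obtain ⟨v, hv, hwv, hne⟩ := hL.2 w hw
  have hlt : w.length < v.length :=
    lt_of_le_of_ne hwv.length_le fun h => hne (hwv.eq_of_length h)
  refine ⟨v[w.length], ?_⟩
  have hw' : w = v.take w.length := List.prefix_iff_eq_take.mp hwv
  have := hL.take_mem hv (w.length + 1)
  rwa [List.take_succ_eq_append_getElem hlt, ← hw'] at this

end PCE

theorem iterate_succ_le_iterate_add_one {f : ℕ → ℕ} (hf : Monotone f)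
    (h : ∀ n, f (n + 1) ≤ f n + 1) (i n : ℕ) : f^[i] (n + 1) ≤ f^[i] n + 1 := by
  induction i with
  | zero => rfl
  | succ i ih =>
    rw [Function.iterate_succ_apply', Function.iterate_succ_apply']
    exact (hf ih).trans (h _)

theorem exists_abs_le_of_eventually_periodic {g : ℕ → ℝ} {q n₀ : ℕ} (hq : 0 < q)
    (hg : ∀ t ≥ n₀, g (t + q) = g t) : ∃ C, ∀ t, |g t| ≤ C := by
  refine ⟨∑ u ∈ Finset.range (n₀ + q), |g u|, fun t => ?_⟩
  induction t using Nat.strong_induction_on with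
  | _ t ih =>
    by_cases ht : t < n₀ + q
    · exact Finset.single_le_sum (fun u _ => abs_nonneg (g u)) (Finset.mem_range.mpr ht)
    · have h := hg (t - q) (by omega)
      rw [Nat.sub_add_cancel (by omega)] at h
      exact h ▸ ih (t - q) (by omega)

theorem Function.Periodic.sum_range_add {M : Type*} [AddCancelCommMonoid M] {r : ℕ → M}
    {q : ℕ} (hr : Function.Periodic r q) (a : ℕ) :
    ∑ i ∈ Finset.range q, r (a + i) = ∑ i ∈ Finset.range q, r i := by
  induction a with
  | zero => simp
  | succ a ih =>
    have h := (Finset.sum_range_succ' (fun i => r (a + i)) q).symm.trans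
      (Finset.sum_range_succ (fun i => r (a + i)) q)
    rw [add_zero, hr, ih] at h
    simpa only [add_assoc, add_comm 1] using add_right_cancel h

theorem exists_abs_sum_range_sub_le {s r : ℕ → ℕ} {p q n₀ : ℕ} (hq : 0 < q)
    (hr : Function.Periodic r q) (hsum : ∑ i ∈ Finset.range q, r i = p)
    (hs : ∀ n ≥ n₀, s n = r (n - n₀)) :
    ∃ C, ∀ t, |∑ i ∈ Finset.range t, (s i : ℝ) - p / q * t| ≤ C := by
  refine exists_abs_le_of_eventually_periodic (n₀ := n₀) hq fun t ht => ?_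
  have hwindow : ∑ i ∈ Finset.range q, s (t + i) = p := by
    rw [← hsum, ← hr.sum_range_add (t - n₀)]
    exact Finset.sum_congr rfl fun i _ => by rw [hs _ (by omega)]; congr 1; omega
  have hwindow' : ∑ i ∈ Finset.range q, (s (t + i) : ℝ) = p := by exact_mod_cast hwindow
  have : (q : ℝ) ≠ 0 := by positivity
  rw [Finset.sum_range_add, hwindow']
  push_cast
  field_simp
  ring

theorem abs_sub_mul_sum_range_le {a : ℕ → ℝ} {μ D : ℝ} {ℓ : ℕ}
    (ha : ∀ i, |a i - μ * a (i + 1)| ≤ D) (hℓ : a ℓ = 0) :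
    |(μ - 1) * ∑ i ∈ Finset.range ℓ, a i - μ * a 0| ≤ ℓ * D := by
  have hshift : ∑ i ∈ Finset.range ℓ, a (i + 1) = ∑ i ∈ Finset.range ℓ, a i - a 0 := by
    have := (Finset.sum_range_succ' a ℓ).symm.trans (Finset.sum_range_succ a ℓ)
    rw [hℓ] at this
    linarith
  have htele : (μ - 1) * ∑ i ∈ Finset.range ℓ, a i - μ * a 0 =
      -∑ i ∈ Finset.range ℓ, (a i - μ * a (i + 1)) := by
    rw [Finset.sum_sub_distrib, ← Finset.mul_sum, hshift]
    ring
  rw [htele, abs_neg]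
  calc |∑ i ∈ Finset.range ℓ, (a i - μ * a (i + 1))|
      ≤ ∑ i ∈ Finset.range ℓ, |a i - μ * a (i + 1)| := Finset.abs_sum_le_sum_abs _ _
    _ ≤ ∑ _i ∈ Finset.range ℓ, D := Finset.sum_le_sum fun i _ => ha i
    _ = ℓ * D := by simp

theorem pow_le_of_abs_sub_mul_le {a : ℕ → ℝ} {μ D : ℝ} (hμ : 1 < μ)
    (ha : ∀ i, |a i - μ * a (i + 1)| ≤ D) {j : ℕ} (hj : D / (μ - 1) + 1 ≤ a j) :
    μ ^ j ≤ a 0 := by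
  -- shifting by the fixed point `E` of `x ↦ μ x - D` makes the recursion an exact inequality
  set E := D / (μ - 1)
  have hE : 0 ≤ E := div_nonneg ((abs_nonneg _).trans (ha 0)) (by linarith)
  have hDE : D = (μ - 1) * E := by
    have : μ - 1 ≠ 0 := by linarith
    simp only [E]; field_simp
  have hstep : ∀ i, μ * (a (i + 1) - E) ≤ a i - E := fun i => by
    have := (abs_le.mp (ha i)).1
    nlinarith
  have hgrow : ∀ k, μ ^ k * (a k - E) ≤ a 0 - E := by
    intro k
    induction k with
    | zero => simp
    | succ k ih =>
      calc μ ^ (k + 1) * (a (k + 1) - E) = μ ^ k * (μ * (a (k + 1) - E)) := by ring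
        _ ≤ μ ^ k * (a k - E) := by gcongr; exact hstep k
        _ ≤ a 0 - E := ih
  calc μ ^ j ≤ μ ^ j * (a j - E) := le_mul_of_one_le_right (by positivity) (by linarith)
    _ ≤ a 0 - E := hgrow j
    _ ≤ a 0 := by linarith

theorem tendsto_div_of_abs_sub_le {f : ℕ → ℝ} {c a b : ℝ}
    (h : ∀ n, |f n - c * n| ≤ a + b * Real.log n) :
    Tendsto (fun n => f n / n) atTop (𝓝 c) := by
  have hbound : Tendsto (fun n : ℕ => (a + b * Real.log n) / n) atTop (𝓝 0) := by
    have hlog := (Real.tendsto_pow_log_div_mul_add_atTop 1 0 1 one_ne_zero).comp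
      tendsto_natCast_atTop_atTop
    simpa [add_div, mul_div_assoc] using
      (tendsto_const_div_atTop_nhds_zero_nat a).add (hlog.const_mul b)
  rw [tendsto_iff_norm_sub_tendsto_zero]
  refine squeeze_zero' (Eventually.of_forall fun n => norm_nonneg _) ?_ hbound
  filter_upwards [eventually_gt_atTop 0] with n hn
  have hn : (0 : ℝ) < n := Nat.cast_pos.mpr hn
  rw [Real.norm_eq_abs, div_sub' hn.ne', abs_div, abs_of_pos hn, mul_comm]
  exact div_le_div_of_nonneg_right (h n) hn.le

theorem signature_le_card_add_one {A : Type*} [Fintype A] (L : Set (List A))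
    (rep : ℕ → List A) (n : ℕ) : signature L rep n ≤ Fintype.card A + 1 := by
  have := Set.ncard_le_card {a : A | rep n ++ [a] ∈ L}
  rw [Nat.card_eq_fintype_card] at this
  unfold signature nodeDeg
  split_ifs <;> omega

/-- The root is its own parent, matching the convention of `signature` that counts the root as its
own child. -/
noncomputable def parentIdx {A : Type*} (rep : ℕ → List A) (n : ℕ) : ℕ :=
  Function.invFun rep (rep n).dropLast

namespace RadixEnum

variable {A : Type*} [LinearOrder A] {L : Set (List A)} {rep : ℕ → List A}

theorem rep_mem (hrep : RadixEnum L rep) (n : ℕ) : rep n ∈ L :=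
  hrep.1.1 (Set.mem_univ n)

theorem injective (hrep : RadixEnum L rep) : Function.Injective rep :=
  Set.injOn_univ.mp hrep.1.2.1

theorem exists_rep_eq (hrep : RadixEnum L rep) {w : List A} (hw : w ∈ L) : ∃ n, rep n = w :=
  let ⟨n, _, hn⟩ := hrep.1.2.2 hw; ⟨n, hn⟩

theorem radixLt_iff (hrep : RadixEnum L rep) {m n : ℕ} : RadixLt (rep m) (rep n) ↔ m < n := by
  refine ⟨fun h => ?_, hrep.2 m n⟩
  by_contra hnm
  rcases (not_lt.mp hnm).lt_or_eq with hnm | rfl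
  · exact (hrep.2 n m hnm).asymm h
  · exact h.asymm h

theorem length_le_length (hrep : RadixEnum L rep) {m n : ℕ} (hmn : m ≤ n) :
    (rep m).length ≤ (rep n).length := by
  rcases hmn.lt_or_eq with hmn | rfl
  · exact (hrep.2 m n hmn).length_le
  · rfl

theorem rep_zero (hL : PCE L) (hrep : RadixEnum L rep) : rep 0 = [] := by
  obtain ⟨k, hk⟩ := hrep.exists_rep_eq (hL.1 _ (hrep.rep_mem 0) [] List.nil_prefix)
  rcases Nat.eq_zero_or_pos k with rfl | hk0
  · exact hk
  · exact absurd (hk ▸ hrep.2 0 k hk0) not_radixLt_nil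

section Parent

variable (hL : PCE L) (hrep : RadixEnum L rep)
include hL hrep

theorem rep_parentIdx (n : ℕ) : rep (parentIdx rep n) = (rep n).dropLast :=
  Function.invFun_eq (hrep.exists_rep_eq (hL.dropLast_mem (hrep.rep_mem n)))

theorem rep_eq_nil_iff {n : ℕ} : rep n = [] ↔ n = 0 :=
  ⟨fun h => hrep.injective (h.trans (hrep.rep_zero hL).symm), fun h => h ▸ hrep.rep_zero hL⟩

theorem parentIdx_zero : parentIdx rep 0 = 0 :=
  (hrep.rep_eq_nil_iff hL).mp (by rw [hrep.rep_parentIdx hL, hrep.rep_zero hL]; rfl)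

theorem parentIdx_lt {n : ℕ} (hn : n ≠ 0) : parentIdx rep n < n :=
  hrep.radixLt_iff.mp <| (hrep.rep_parentIdx hL n).symm ▸
    radixLt_dropLast (mt (hrep.rep_eq_nil_iff hL).mp hn)

theorem monotone_parentIdx : Monotone (parentIdx rep) := by
  intro m n hmn
  by_contra hlt
  have h := hrep.radixLt_iff.mpr (not_le.mp hlt)
  rw [hrep.rep_parentIdx hL, hrep.rep_parentIdx hL] at h
  exact absurd (hrep.radixLt_iff.mp h.of_dropLast) (not_lt.mpr hmn)

theorem rep_iterate_parentIdx (i n : ℕ) :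
    rep ((parentIdx rep)^[i] n) = (rep n).take ((rep n).length - i) := by
  induction i with
  | zero => simp
  | succ i ih =>
    rw [Function.iterate_succ_apply', hrep.rep_parentIdx hL, ih, List.dropLast_eq_take,
      List.take_take, List.length_take]
    congr 1
    omega

theorem length_iterate_parentIdx (i n : ℕ) :
    (rep ((parentIdx rep)^[i] n)).length = (rep n).length - i := by
  rw [hrep.rep_iterate_parentIdx hL, List.length_take]
  omega

theorem iterate_length_parentIdx (n : ℕ) : (parentIdx rep)^[(rep n).length] n = 0 :=
  (hrep.rep_eq_nil_iff hL).mp <| List.length_eq_zero_iff.mp <| by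
    rw [hrep.length_iterate_parentIdx hL, Nat.sub_self]

theorem length_succ_le (n : ℕ) : (rep (n + 1)).length ≤ (rep n).length + 1 := by
  have h := hrep.length_le_length (Nat.lt_add_one_iff.mp (hrep.parentIdx_lt hL n.add_one_ne_zero))
  simp only [hrep.rep_parentIdx hL, List.length_dropLast] at h
  omega

theorem length_le_self (n : ℕ) : (rep n).length ≤ n := by
  induction n with
  | zero => simp [hrep.rep_zero hL]
  | succ n ih => have := hrep.length_succ_le hL n; omega

theorem parentIdx_eq_iff {m j : ℕ} :
    parentIdx rep m = j ↔ (m = 0 ∧ j = 0) ∨ ∃ a, rep m = rep j ++ [a] := by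
  constructor
  · rintro rfl
    by_cases hm : m = 0
    · exact Or.inl ⟨hm, hm ▸ hrep.parentIdx_zero hL⟩
    · have hne : rep m ≠ [] := mt (hrep.rep_eq_nil_iff hL).mp hm
      exact Or.inr ⟨(rep m).getLast hne, by
        rw [hrep.rep_parentIdx hL, List.dropLast_append_getLast]⟩
  · rintro (⟨rfl, rfl⟩ | ⟨a, ha⟩)
    · exact hrep.parentIdx_zero hL
    · exact hrep.injective (by rw [hrep.rep_parentIdx hL, ha, List.dropLast_concat])

theorem exists_parentIdx_eq (j : ℕ) : ∃ c, parentIdx rep c = j := by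
  obtain ⟨a, ha⟩ := hL.exists_append_singleton_mem (hrep.rep_mem j)
  obtain ⟨c, hc⟩ := hrep.exists_rep_eq ha
  exact ⟨c, (hrep.parentIdx_eq_iff hL).mpr (Or.inr ⟨a, hc⟩)⟩

theorem parentIdx_succ_le (n : ℕ) : parentIdx rep (n + 1) ≤ parentIdx rep n + 1 := by
  by_contra h
  obtain ⟨c, hc⟩ := hrep.exists_parentIdx_eq hL (parentIdx rep n + 1)
  have hmono := hrep.monotone_parentIdx hL
  have h₁ := hmono.reflect_lt (show parentIdx rep n < parentIdx rep c by omega)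
  have h₂ := hmono.reflect_lt (show parentIdx rep c < parentIdx rep (n + 1) by omega)
  omega

theorem encard_setOf_parentIdx_eq [Finite A] (j : ℕ) :
    {m | parentIdx rep m = j}.encard = signature L rep j := by
  set children := rep ⁻¹' ((fun a => rep j ++ [a]) '' {a | rep j ++ [a] ∈ L})
  have hsplit : {m | parentIdx rep m = j} = children ∪ {m | m = 0 ∧ j = 0} := by
    ext m
    simp only [children, Set.mem_ofPred_eq, hrep.parentIdx_eq_iff hL, Set.mem_union,
      Set.mem_preimage, Set.mem_image]
    constructor
    · rintro (h | ⟨a, ha⟩)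
      · exact Or.inr h
      · exact Or.inl ⟨a, ha ▸ hrep.rep_mem m, ha.symm⟩
    · rintro (⟨a, -, ha⟩ | h)
      · exact Or.inr ⟨a, ha.symm⟩
      · exact Or.inl h
  have hdisj : Disjoint children {m | m = 0 ∧ j = 0} := by
    refine Set.disjoint_left.mpr ?_
    rintro m ⟨a, -, ha⟩ ⟨rfl, -⟩
    simp [hrep.rep_zero hL] at ha
  have hchildren : children.encard = nodeDeg L (rep j) := by
    rw [Set.encard_preimage_of_injective_subset_range hrep.injective,
      Function.Injective.encard_image (f := fun a => rep j ++ [a]) (fun a b h => by simpa using h),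
      nodeDeg, Set.Finite.cast_ncard_eq (Set.toFinite _)]
    rintro _ ⟨a, ha, rfl⟩
    exact hrep.exists_rep_eq ha
  rw [hsplit, Set.encard_union_eq hdisj, hchildren, signature]
  split_ifs with hj <;> simp [hj]

theorem encard_setOf_parentIdx_lt [Finite A] (j : ℕ) :
    {m | parentIdx rep m < j}.encard = ∑ i ∈ Finset.range j, signature L rep i := by
  induction j with
  | zero => simp
  | succ j ih =>
    have hsplit : {m | parentIdx rep m < j + 1} =
        {m | parentIdx rep m < j} ∪ {m | parentIdx rep m = j} := by
      ext m; simp only [Set.mem_ofPred_eq, Set.mem_union]; omega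
    have hdisj : Disjoint {m | parentIdx rep m < j} {m | parentIdx rep m = j} :=
      Set.disjoint_left.mpr fun _ h h' => ne_of_lt h h'
    rw [hsplit, Set.encard_union_eq hdisj, ih, hrep.encard_setOf_parentIdx_eq hL,
      Finset.sum_range_succ]
    push_cast
    rfl

theorem sum_signature_parentIdx_le [Finite A] (n : ℕ) :
    ∑ i ∈ Finset.range (parentIdx rep n), signature L rep i ≤ n := by
  have h : {m | parentIdx rep m < parentIdx rep n} ⊆ ↑(Finset.range n) := fun m hm =>
    Finset.mem_coe.mpr (Finset.mem_range.mpr ((hrep.monotone_parentIdx hL).reflect_lt hm))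
  have := Set.encard_le_encard h
  rwa [hrep.encard_setOf_parentIdx_lt hL, Set.encard_coe_eq_coe_finsetCard, Finset.card_range,
    Nat.cast_le] at this

theorem lt_sum_signature_parentIdx_succ [Finite A] (n : ℕ) :
    n < ∑ i ∈ Finset.range (parentIdx rep n + 1), signature L rep i := by
  have h : ↑(Finset.range (n + 1)) ⊆ {m | parentIdx rep m < parentIdx rep n + 1} := fun m hm =>
    Nat.lt_add_one_iff.mpr <| hrep.monotone_parentIdx hL <|
      Nat.lt_add_one_iff.mp (Finset.mem_range.mp (Finset.mem_coe.mp hm))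
  have := Set.encard_le_encard h
  rwa [hrep.encard_setOf_parentIdx_lt hL, Set.encard_coe_eq_coe_finsetCard, Finset.card_range,
    Nat.cast_le, Nat.add_one_le_iff] at this

theorem iterate_parentIdx_succ_of_length_eq {n : ℕ}
    (h : (rep (n + 1)).length = (rep n).length) (i : ℕ) :
    (parentIdx rep)^[i] (n + 1) = (parentIdx rep)^[i] n +
      if i < (rep n).length - lcpLen (rep n) (rep (n + 1)) then 1 else 0 := by
  have hmono := (hrep.monotone_parentIdx hL).iterate i (Nat.le_add_right n 1)
  have hle := iterate_succ_le_iterate_add_one (hrep.monotone_parentIdx hL)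
    (hrep.parentIdx_succ_le hL) i n
  have hne : rep n ≠ rep (n + 1) := fun h' => n.succ_ne_self (hrep.injective h').symm
  have heq : (parentIdx rep)^[i] (n + 1) = (parentIdx rep)^[i] n ↔
      (rep n).length - i ≤ lcpLen (rep n) (rep (n + 1)) := by
    rw [← take_eq_take_iff_le_lcpLen hne, ← hrep.rep_iterate_parentIdx hL, ← h,
      ← hrep.rep_iterate_parentIdx hL, hrep.injective.eq_iff, eq_comm]
  split_ifs with hi
  · have := mt heq.mp (by omega)
    omega
  · exact (heq.mpr (by omega)).trans (Nat.add_zero _).symm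

theorem iterate_parentIdx_succ_of_length_succ {n : ℕ}
    (h : (rep (n + 1)).length = (rep n).length + 1) {i : ℕ} (hi : i ≤ (rep n).length) :
    (parentIdx rep)^[i] (n + 1) = (parentIdx rep)^[i] n + 1 := by
  induction i with
  | zero => rfl
  | succ i ih =>
    -- the two ancestors have different lengths, so `parentIdx_succ_le` leaves only the step `+ 1`
    have hne : (parentIdx rep)^[i + 1] (n + 1) ≠ (parentIdx rep)^[i + 1] n := fun heq => by
      have := congrArg (fun k => (rep k).length) heq
      simp only [hrep.length_iterate_parentIdx hL, h] at this
      omega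
    have hmono := hrep.monotone_parentIdx hL (Nat.le_add_right ((parentIdx rep)^[i] n) 1)
    have hle := hrep.parentIdx_succ_le hL ((parentIdx rep)^[i] n)
    rw [Function.iterate_succ_apply', Function.iterate_succ_apply', ih (by omega)] at hne ⊢
    omega

theorem sum_Delta_eq (n : ℕ) :
    ∑ i ∈ Finset.range n, Delta (rep i) (rep (i + 1)) =
      ∑ i ∈ Finset.range (rep n).length, (parentIdx rep)^[i] n := by
  induction n with
  | zero => simp [hrep.rep_zero hL]
  | succ n ih =>
    rw [Finset.sum_range_succ, ih]
    rcases (hrep.length_le_length (Nat.le_add_right n 1)).eq_or_lt with h | h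
    · rw [Delta, if_pos h, ← h,
        Finset.sum_congr rfl fun i _ => hrep.iterate_parentIdx_succ_of_length_eq hL h.symm i,
        Finset.sum_add_distrib, Finset.sum_boole]
      have hc := lcpLen_le_length_left (rep n) (rep (n + 1))
      have : (Finset.range (rep n).length).filter
          (· < (rep n).length - lcpLen (rep n) (rep (n + 1))) =
          Finset.range ((rep n).length - lcpLen (rep n) (rep (n + 1))) := by
        ext i; simp only [Finset.mem_filter, Finset.mem_range]; omega
      simp [this]
    · have h : (rep (n + 1)).length = (rep n).length + 1 :=
        le_antisymm (hrep.length_succ_le hL n) h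
      rw [Delta, if_neg (by omega), h, max_eq_right (by omega),
        Finset.sum_congr rfl fun i hi => hrep.iterate_parentIdx_succ_of_length_succ hL h
          (Nat.lt_add_one_iff.mp (Finset.mem_range.mp hi)),
        Finset.sum_add_distrib, Finset.sum_range_succ, hrep.iterate_length_parentIdx hL]
      simp

theorem abs_sub_mul_parentIdx_le [Fintype A] {μ C : ℝ}
    (hC : ∀ t, |∑ i ∈ Finset.range t, (signature L rep i : ℝ) - μ * t| ≤ C) (n : ℕ) :
    |(n : ℝ) - μ * parentIdx rep n| ≤ C + (Fintype.card A + 1) := by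
  set j := parentIdx rep n
  have hlow := hrep.sum_signature_parentIdx_le hL n
  have hhigh := hrep.lt_sum_signature_parentIdx_succ hL n
  rw [Finset.sum_range_succ] at hhigh
  have hsig := signature_le_card_add_one L rep j
  have h₁ : ∑ i ∈ Finset.range j, (signature L rep i : ℝ) ≤ n := by exact_mod_cast hlow
  have h₂ : (n : ℝ) < ∑ i ∈ Finset.range j, (signature L rep i : ℝ) + signature L rep j :=
    mod_cast hhigh
  have h₃ : (signature L rep j : ℝ) ≤ Fintype.card A + 1 := by exact_mod_cast hsig
  have hclose :
      |(n : ℝ) - ∑ i ∈ Finset.range j, (signature L rep i : ℝ)| ≤ Fintype.card A + 1 :=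
    abs_le.mpr ⟨by linarith, by linarith⟩
  calc |(n : ℝ) - μ * j|
      ≤ |(n : ℝ) - ∑ i ∈ Finset.range j, (signature L rep i : ℝ)| +
          |∑ i ∈ Finset.range j, (signature L rep i : ℝ) - μ * j| := abs_sub_le _ _ _
    _ ≤ C + (Fintype.card A + 1) := by linarith [hC j]

theorem abs_sub_mul_sum_Delta_le {μ D : ℝ}
    (hD : ∀ n : ℕ, |(n : ℝ) - μ * parentIdx rep n| ≤ D) (n : ℕ) :
    |(μ - 1) * ∑ i ∈ Finset.range n, (Delta (rep i) (rep (i + 1)) : ℝ) - μ * n| ≤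
      (rep n).length * D := by
  rw [← Nat.cast_sum, hrep.sum_Delta_eq hL, Nat.cast_sum]
  exact abs_sub_mul_sum_range_le (a := fun i => ((parentIdx rep)^[i] n : ℝ))
    (fun i => by simpa only [Function.iterate_succ_apply'] using hD _)
    (by simp [hrep.iterate_length_parentIdx hL])

theorem exists_length_le_add_logb {μ D : ℝ} (hμ : 1 < μ)
    (hD : ∀ n : ℕ, |(n : ℝ) - μ * parentIdx rep n| ≤ D) :
    ∃ K : ℝ, ∀ n, ((rep n).length : ℝ) ≤ K + Real.logb μ n := by
  set K := ⌈D / (μ - 1)⌉₊ + 1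
  refine ⟨K, fun n => ?_⟩
  rcases le_or_gt (rep n).length K with hK | hK
  · have : 0 ≤ Real.logb μ n := by
      rcases Nat.eq_zero_or_pos n with rfl | hn
      · simp
      · exact Real.logb_nonneg hμ (Nat.one_le_cast.mpr hn)
    have : ((rep n).length : ℝ) ≤ K := by exact_mod_cast hK
    linarith
  · set j := (rep n).length - K
    -- the ancestor `parentIdx^[j] n` has length `K`, and indices dominate lengths
    have hj : D / (μ - 1) + 1 ≤ ((parentIdx rep)^[j] n : ℝ) := by
      have h₁ := hrep.length_le_self hL ((parentIdx rep)^[j] n)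
      rw [hrep.length_iterate_parentIdx hL] at h₁
      have h₂ : ((rep n).length - j : ℕ) = K := by omega
      rw [h₂] at h₁
      have h₃ := Nat.le_ceil (D / (μ - 1))
      have h₄ : (K : ℝ) ≤ ((parentIdx rep)^[j] n : ℝ) := by exact_mod_cast h₁
      simp only [K, Nat.cast_add, Nat.cast_one] at h₄
      linarith
    have hpow := pow_le_of_abs_sub_mul_le (a := fun i => ((parentIdx rep)^[i] n : ℝ)) hμ
      (fun i => by simpa only [Function.iterate_succ_apply'] using hD _) hj
    simp only [Function.iterate_zero, id] at hpow
    have hn : (0 : ℝ) < n := lt_of_lt_of_le (by positivity) hpow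
    have hlogb : (j : ℝ) ≤ Real.logb μ n :=
      (Real.le_logb_iff_rpow_le hμ hn).mpr (by rwa [Real.rpow_natCast])
    have : ((rep n).length : ℝ) = K + j := by norm_cast; omega
    linarith

theorem tendsto_sum_Delta_div {μ D : ℝ} (hμ : 1 < μ)
    (hD : ∀ n : ℕ, |(n : ℝ) - μ * parentIdx rep n| ≤ D) :
    Tendsto (fun N : ℕ => (∑ i ∈ Finset.range N, (Delta (rep i) (rep (i + 1)) : ℝ)) / N)
      atTop (𝓝 (μ / (μ - 1))) := by
  obtain ⟨K, hK⟩ := hrep.exists_length_le_add_logb hL hμ hD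
  have hD0 : 0 ≤ D := (abs_nonneg _).trans (hD 0)
  have hμ1 : 0 < μ - 1 := by linarith
  refine tendsto_div_of_abs_sub_le (a := D / (μ - 1) * K)
    (b := D / (μ - 1) / Real.log μ) fun n => ?_
  set S := ∑ i ∈ Finset.range n, (Delta (rep i) (rep (i + 1)) : ℝ)
  have hdiv : S - μ / (μ - 1) * n = ((μ - 1) * S - μ * n) / (μ - 1) := by
    field_simp
  rw [hdiv, abs_div, abs_of_pos hμ1, div_le_iff₀ hμ1]
  calc |(μ - 1) * S - μ * n| ≤ (rep n).length * D := hrep.abs_sub_mul_sum_Delta_le hL hD n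
    _ ≤ (K + Real.logb μ n) * D := mul_le_mul_of_nonneg_right (hK n) hD0
    _ = (D / (μ - 1) * K + D / (μ - 1) / Real.log μ * Real.log n) * (μ - 1) := by
      have := Real.log_pos hμ
      rw [Real.logb]
      field_simp

end Parent

end RadixEnum

/-- If a PCE language `L` has an eventually periodic signature whose periodic
rhythm has directing parameter `(q, p)` (a `q`-periodic sequence of nonnegative
integers summing to `p` over one period, `p > q ≥ 1`), then the carry propagation
`CP(L) = lim (1/N) ∑_{i<N} cp_L(i)` exists and equals `p / (p - q)`. -/
theorem carry_stmt13 {A : Type*} [Fintype A] [LinearOrder A]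
    (L : Set (List A)) (hL : PCE L)
    (rep : ℕ → List A) (hrep : RadixEnum L rep)
    (p q : ℕ) (hq : 1 ≤ q) (hpq : q < p)
    (r : ℕ → ℕ) (hper : ∀ i, r (i + q) = r i)
    (hsum : ∑ i ∈ Finset.range q, r i = p)
    (n₀ : ℕ) (hsig : ∀ n ≥ n₀, signature L rep n = r (n - n₀)) :
    Tendsto
      (fun N : ℕ => (∑ i ∈ Finset.range N, (Delta (rep i) (rep (i + 1)) : ℝ)) / N)
      atTop (nhds ((p : ℝ) / ((p : ℝ) - (q : ℝ)))) := by
  have hq' : (0 : ℝ) < q := by exact_mod_cast hq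
  have hqp : (q : ℝ) < p := by exact_mod_cast hpq
  have hμ : 1 < (p / q : ℝ) := (one_lt_div hq').mpr hqp
  have hlim : (p : ℝ) / (p - q) = p / q / (p / q - 1) := by
    have : (p : ℝ) - q ≠ 0 := by linarith
    field_simp
  obtain ⟨C, hC⟩ := exists_abs_sum_range_sub_le hq hper hsum hsig
  rw [hlim]
  exact hrep.tendsto_sum_Delta_div hL hμ (hrep.abs_sub_mul_parentIdx_le hL hC)
end
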